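/- arXiv:1811.00594 — 2 statements merged into one kernel-verified Lean document; each statement's English description precedes it below -/
import Mathlib

section
/- Let θ : A → A^λ be a primitive substitution of constant length λ ≥ 2 over a finite alphabet A with θ(a₀)_0 = a₀ for some a₀ ∈ A. If the column number satisfies c(θ) = 1, then the height satisfies h(θ) = 1. -/
open Filter Topology

/-- `substIter θ l k a j` is the `j`-th letter of `θ^k(a)`, where `θ : A → A^l` is a
substitution of constant length `l` (the letters of `θ(a)` being `θ a 0, …, θ a (l-1)`).
It is meaningful for `j < l ^ k` and satisfies
`θ^{k+1}(a)_{j'·l + r} = θ(θ^k(a)_{j'})_r`. -/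
def substIter {A : Type*} (θ : A → ℕ → A) (l : ℕ) : ℕ → A → ℕ → A
  | 0, a, _ => a
  | k + 1, a, j => θ (substIter θ l k a (j / l)) (j % l)

/-- A substitution of constant length `l` is primitive if some iterate of every letter
contains every letter. -/
def SubstPrimitive {A : Type*} (θ : A → ℕ → A) (l : ℕ) : Prop :=
  ∃ k, 1 ≤ k ∧ ∀ a b : A, ∃ j, j < l ^ k ∧ substIter θ l k a j = b

/-- Primitivity of a substitution restricted to a sub-alphabet `S`. -/
def SubstPrimitiveOn {A : Type*} (θ : A → ℕ → A) (l : ℕ) (S : Set A) : Prop :=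
  ∃ k, 1 ≤ k ∧ ∀ a ∈ S, ∀ b ∈ S, ∃ j, j < l ^ k ∧ substIter θ l k a j = b

/-- The column number of a substitution of constant length `l`, restricted to the
sub-alphabet `S`: the minimal cardinality of a column set `{θ^k(a)_j : a ∈ S}`. -/
noncomputable def columnNumberOn {A : Type*} (θ : A → ℕ → A) (l : ℕ) (S : Set A) : ℕ :=
  sInf { n : ℕ | ∃ k, 1 ≤ k ∧ ∃ j, j < l ^ k ∧
    ((fun a => substIter θ l k a j) '' S).ncard = n }

/-- The column number `c(θ)` of a substitution of constant length `l`. -/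
noncomputable def columnNumber {A : Type*} (θ : A → ℕ → A) (l : ℕ) : ℕ :=
  columnNumberOn θ l Set.univ

/-- The one-sided fixed point `u` of `θ` obtained by iterating `θ` at a letter `a₀`
with `θ(a₀)_0 = a₀`: `u n = θ^k(a₀)_n` for any `k` with `n < l^k`. -/
def substFixedPoint {A : Type*} (θ : A → ℕ → A) (l : ℕ) (a₀ : A) : ℕ → A :=
  fun n => substIter θ l (n + 1) a₀ n

/-- The height `h(θ)`: the largest `m ≥ 1` coprime to `l` dividing
`gcd {r ≥ 1 : u[r] = u[0]}`, i.e. dividing every return time of `u[0]`. -/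
noncomputable def substHeight {A : Type*} (θ : A → ℕ → A) (l : ℕ) (a₀ : A) : ℕ :=
  sSup { m : ℕ | 1 ≤ m ∧ Nat.Coprime m l ∧
    ∀ r : ℕ, 1 ≤ r → substFixedPoint θ l a₀ r = substFixedPoint θ l a₀ 0 → m ∣ r }

/-- The subshift `X_θ ⊆ A^ℤ`: all `x` each of whose finite blocks occurs in some
`θ^k(a)`. -/
def subshift {A : Type*} (θ : A → ℕ → A) (l : ℕ) : Set (ℤ → A) :=
  { x | ∀ (i : ℤ) (n : ℕ), ∃ k, 1 ≤ k ∧ ∃ a : A, ∃ j : ℕ, j + n ≤ l ^ k ∧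
      ∀ m : ℕ, m < n → x (i + (m : ℤ)) = substIter θ l k a (j + m) }

/-- The subshift `X_x ⊆ A^ℤ` generated by a one-sided sequence `x ∈ A^ℕ`: all `z`
each of whose finite blocks occurs in `x`. -/
def subshiftOf {A : Type*} (x : ℕ → A) : Set (ℤ → A) :=
  { z | ∀ (i : ℤ) (n : ℕ), ∃ j : ℕ, ∀ m : ℕ, m < n → z (i + (m : ℤ)) = x (j + m) }

/-- The left shift on `A^ℤ`. -/
def shift {A : Type*} (x : ℤ → A) : ℤ → A := fun n => x (n + 1)

/-- A bounded arithmetic function. -/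
def BoundedSeq (u : ℕ → ℂ) : Prop := ∃ C : ℝ, ∀ n, ‖u n‖ ≤ C

/-- A multiplicative arithmetic function: `u(mn) = u(m)u(n)` for coprime `m, n`. -/
def MultiplicativeSeq (u : ℕ → ℂ) : Prop :=
  ∀ m n : ℕ, Nat.Coprime m n → u (m * n) = u m * u n

/-- An aperiodic arithmetic function: zero mean along every arithmetic progression. -/
def AperiodicSeq (u : ℕ → ℂ) : Prop :=
  ∀ a b : ℕ, 1 ≤ a →
    Tendsto (fun N : ℕ => (N : ℂ)⁻¹ * ∑ n ∈ Finset.Icc 1 N, u (a * n + b)) atTop (nhds 0)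

/-- The Weyl pseudo-metric
`d_W(x,y) = limsup_N sup_{ℓ ≥ 1} (1/N)·#{ℓ ≤ n < ℓ+N : x n ≠ y n}`. -/
noncomputable def weylDist {B : Type*} (x y : ℕ → B) : ℝ :=
  limsup (fun N : ℕ =>
    ⨆ ℓ : ℕ, ⨆ _ : 1 ≤ ℓ,
      (({ n : ℕ | ℓ ≤ n ∧ n < ℓ + N ∧ x n ≠ y n }.ncard : ℝ) / N)) atTop

/-- A periodic sequence. -/
def IsPeriodicSeq {B : Type*} (v : ℕ → B) : Prop :=
  ∃ p, 1 ≤ p ∧ ∀ n, v (n + p) = v n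

/-- Weyl rational almost periodicity: a `d_W`-limit of periodic sequences. -/
def WRAPSeq {B : Type*} (x : ℕ → B) : Prop :=
  ∀ ε : ℝ, 0 < ε → ∃ v : ℕ → B, IsPeriodicSeq v ∧ weylDist x v < ε

/-- The family `𝒳(θ)` of column sets realizing the column number of `θ`. -/
noncomputable def columnSets {A : Type*} (θ : A → ℕ → A) (l : ℕ) : Set (Set A) :=
  { M | (∃ k, 1 ≤ k ∧ ∃ j, j < l ^ k ∧ M = (fun a => substIter θ l k a j) '' Set.univ) ∧
        M.ncard = columnNumber θ l }

/-- The synchronizing part `~θ` of `θ`, as a substitution on subsets of the alphabet: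
`~θ(M)_j = {θ(a)_j : a ∈ M}`. -/
def synchPart {A : Type*} (θ : A → ℕ → A) : Set A → ℕ → Set A :=
  fun M j => (fun a => θ a j) '' M

/-- The joining `θ ∨ ζ` of two substitutions of the same constant length. -/
def joinSub {A B : Type*} (θ : A → ℕ → A) (ζ : B → ℕ → B) : A × B → ℕ → A × B :=
  fun p j => (θ p.1 j, ζ p.2 j)

/-- The pure base `θ^{(h)}` of `θ`: a substitution of length `l` on blocks of length `h`,
`θ^{(h)}(w)_j = θ(w)[jh, (j+1)h−1]`, where `θ(w)` is the concatenation
`θ(w_0)…θ(w_{h-1})`. -/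
def pureBase {A : Type*} (θ : A → ℕ → A) (l h : ℕ) : (Fin h → A) → ℕ → (Fin h → A) :=
  fun w j i => θ (w ⟨(j * h + i.val) / l % h, Nat.mod_lt _ i.pos⟩) ((j * h + i.val) % l)

/-- Iterated cocycle `σ^{(k)}`, with `σ^{(1)} = σ` and
`σ^{(k+1)}(M, j₁·l + j₂) = σ^{(k)}(M, j₁) ∘ σ(~θ^k(M)_{j₁}, j₂)`. -/
def sigmaIter {X : Type*} {c : ℕ} (tilde : X → ℕ → X)
    (σ : X → ℕ → Equiv.Perm (Fin c)) (l : ℕ) : ℕ → X → ℕ → Equiv.Perm (Fin c)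
  | 0, _, _ => 1
  | k + 1, M, j =>
      sigmaIter tilde σ l k M (j / l) * σ (substIter tilde l k M (j / l)) (j % l)

/-- The group extension substitution `Θ̂(g, M)_j = (g ∘ σ(M,j), ~θ(M)_j)`. -/
def hatTheta {X : Type*} {c : ℕ} (tilde : X → ℕ → X)
    (σ : X → ℕ → Equiv.Perm (Fin c)) : Equiv.Perm (Fin c) × X → ℕ → Equiv.Perm (Fin c) × X :=
  fun p j => (p.1 * σ p.2 j, tilde p.2 j)

/-- The group `G` generated by the cocycle values `σ(M, j)`, `M ∈ 𝒳`, `j < l`. -/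
def cocycleGroup {X : Type*} {c : ℕ} (σ : X → ℕ → Equiv.Perm (Fin c)) (l : ℕ) :
    Subgroup (Equiv.Perm (Fin c)) :=
  Subgroup.closure { g | ∃ M : X, ∃ j, j < l ∧ g = σ M j }

/-! Column number `1` yields a column `θ^k(·)_j` constant equal to some letter `b`, and by
primitivity `a₀` occurs in `θ^K(b)`, say at position `p`. Since `θ^{K+k}(u) = u`, the letter
`a₀ = u[0]` then recurs at every position `≡ j·l^K + p (mod l^{K+k})`, so two return times of
`u[0]` differ by `l^{K+k}`, and the only divisor of that coprime to `l` is `1`. -/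

section SubstIter

variable {A : Type*} (θ : A → ℕ → A) (l : ℕ)

lemma substIter_add (hl : 0 < l) (k₁ k₂ : ℕ) (a : A) (j₂ : ℕ) {j₁ : ℕ} (h : j₁ < l ^ k₁) :
    substIter θ l (k₁ + k₂) a (j₂ * l ^ k₁ + j₁) =
      substIter θ l k₁ (substIter θ l k₂ a j₂) j₁ := by
  induction k₁ generalizing j₁ with
  | zero =>
    obtain rfl : j₁ = 0 := by simpa using h
    simp [substIter]
  | succ k ih =>
    have hrw : j₂ * l ^ (k + 1) + j₁ = j₁ + l * (j₂ * l ^ k) := by ring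
    have hdiv : (j₂ * l ^ (k + 1) + j₁) / l = j₂ * l ^ k + j₁ / l := by
      rw [hrw, Nat.add_mul_div_left _ _ hl, add_comm]
    have hmod : (j₂ * l ^ (k + 1) + j₁) % l = j₁ % l := by
      rw [hrw, Nat.add_mul_mod_self_left]
    have hj : j₁ / l < l ^ k := Nat.div_lt_of_lt_mul (by rwa [← pow_succ'])
    rw [show k + 1 + k₂ = k + k₂ + 1 by omega]
    simp only [substIter]
    rw [hdiv, hmod, ih hj]

variable {θ l} {a₀ : A}

lemma substIter_apply_zero_of_fixed (ha₀ : θ a₀ 0 = a₀) (k : ℕ) :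
    substIter θ l k a₀ 0 = a₀ := by
  induction k with
  | zero => rfl
  | succ k ih => simp [substIter, ih, ha₀]

lemma substIter_add_of_fixed (ha₀ : θ a₀ 0 = a₀) (hl : 0 < l) (k k' : ℕ) {n : ℕ}
    (h : n < l ^ k) : substIter θ l (k + k') a₀ n = substIter θ l k a₀ n := by
  simpa [substIter_apply_zero_of_fixed ha₀] using substIter_add θ l hl k k' a₀ 0 h

lemma substFixedPoint_eq_substIter (ha₀ : θ a₀ 0 = a₀) (hl : 1 < l) {k n : ℕ}
    (h : n < l ^ k) : substFixedPoint θ l a₀ n = substIter θ l k a₀ n := by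
  have hn : n < l ^ (n + 1) :=
    (Nat.lt_pow_self hl).trans (Nat.pow_lt_pow_right hl n.lt_succ_self)
  rw [substFixedPoint, ← substIter_add_of_fixed ha₀ (by omega) _ k hn,
    ← substIter_add_of_fixed ha₀ (by omega) _ (n + 1) h, add_comm]

/-- `θ^n(u) = u`, read off at the block of `u` of length `l^n` with index `q`. -/
lemma substFixedPoint_mul_pow_add (ha₀ : θ a₀ 0 = a₀) (hl : 1 < l) (n q : ℕ) {r : ℕ}
    (hr : r < l ^ n) :
    substFixedPoint θ l a₀ (q * l ^ n + r) = substIter θ l n (substFixedPoint θ l a₀ q) r := by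
  have hq : q < l ^ (q + 1) :=
    (Nat.lt_pow_self hl).trans (Nat.pow_lt_pow_right hl q.lt_succ_self)
  have hlt : q * l ^ n + r < l ^ (n + (q + 1)) := by
    calc q * l ^ n + r < (q + 1) * l ^ n := by rw [add_one_mul]; omega
      _ ≤ l ^ (q + 1) * l ^ n := Nat.mul_le_mul_right _ hq
      _ = l ^ (n + (q + 1)) := by rw [pow_add l n, mul_comm]
  rw [substFixedPoint_eq_substIter ha₀ hl hlt, substIter_add θ l (by omega) _ _ _ _ hr,
    substFixedPoint_eq_substIter ha₀ hl hq]

end SubstIter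

lemma exists_const_column_of_columnNumber_eq_one {A : Type*} {θ : A → ℕ → A} {l : ℕ}
    (hc : columnNumber θ l = 1) :
    ∃ k j, j < l ^ k ∧ ∃ b : A, ∀ a, substIter θ l k a j = b := by
  have hne : { n : ℕ | ∃ k, 1 ≤ k ∧ ∃ j, j < l ^ k ∧
      ((fun a => substIter θ l k a j) '' Set.univ).ncard = n }.Nonempty := by
    by_contra h
    rw [Set.not_nonempty_iff_eq_empty] at h
    rw [columnNumber, columnNumberOn, h, Nat.sInf_empty] at hc
    exact zero_ne_one hc
  obtain ⟨k, -, j, hj, hcard⟩ := Nat.sInf_mem hne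
  obtain ⟨b, hb⟩ := Set.ncard_eq_one.mp (hcard.trans hc)
  exact ⟨k, j, hj, b, fun a =>
    Set.mem_singleton_iff.mp (hb ▸ Set.mem_image_of_mem _ (Set.mem_univ a))⟩

lemma substHeight_eq_one_of_returns {A : Type*} {θ : A → ℕ → A} {l : ℕ} {a₀ : A} {r : ℕ}
    (n : ℕ) (hr : 1 ≤ r) (hu : substFixedPoint θ l a₀ r = substFixedPoint θ l a₀ 0)
    (hu' : substFixedPoint θ l a₀ (r + l ^ n) = substFixedPoint θ l a₀ 0) :
    substHeight θ l a₀ = 1 := by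
  suffices h : { m : ℕ | 1 ≤ m ∧ Nat.Coprime m l ∧ ∀ r : ℕ, 1 ≤ r →
      substFixedPoint θ l a₀ r = substFixedPoint θ l a₀ 0 → m ∣ r } = {1} by
    rw [substHeight, h, csSup_singleton]
  ext m
  refine ⟨fun ⟨_, hml, hm⟩ => ?_, ?_⟩
  · have hdvd : m ∣ l ^ n := (Nat.dvd_add_right (hm r hr hu)).mp (hm _ (by omega) hu')
    exact (Nat.Coprime.pow_right n hml).eq_one_of_dvd hdvd
  · rintro rfl
    exact ⟨le_rfl, Nat.coprime_one_left l, fun r _ _ => one_dvd r⟩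

theorem height_eq_one_of_column_eq_one_general
    {A : Type*} (l : ℕ) (hl : 2 ≤ l)
    (θ : A → ℕ → A) (hθ : SubstPrimitive θ l)
    (a₀ : A) (ha₀ : θ a₀ 0 = a₀)
    (hc : columnNumber θ l = 1) :
    substHeight θ l a₀ = 1 := by
  have hl0 : 0 < l := by omega
  obtain ⟨k, j, hj, b, hb⟩ := exists_const_column_of_columnNumber_eq_one hc
  obtain ⟨K, -, hprim⟩ := hθ
  obtain ⟨p, hp, hbp⟩ := hprim b a₀
  have hr : j * l ^ K + p < l ^ (K + k) := by
    calc j * l ^ K + p < (j + 1) * l ^ K := by rw [add_one_mul]; omega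
      _ ≤ l ^ k * l ^ K := Nat.mul_le_mul_right _ hj
      _ = l ^ (K + k) := by rw [pow_add, mul_comm]
  have hret : ∀ q, substFixedPoint θ l a₀ (q * l ^ (K + k) + (j * l ^ K + p)) = a₀ := fun q => by
    rw [substFixedPoint_mul_pow_add ha₀ hl _ _ hr, substIter_add θ l hl0 _ _ _ _ hp, hb, hbp]
  have hu0 : substFixedPoint θ l a₀ 0 = a₀ := substIter_apply_zero_of_fixed ha₀ 1
  refine substHeight_eq_one_of_returns (K + k) (r := 1 * l ^ (K + k) + (j * l ^ K + p))
    (by have := Nat.one_le_pow (K + k) l hl0; omega) ((hret 1).trans hu0.symm) ?_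
  rw [show 1 * l ^ (K + k) + (j * l ^ K + p) + l ^ (K + k) = 2 * l ^ (K + k) + (j * l ^ K + p)
    by ring, hret 2, hu0]

/-- A primitive substitution with column number `1` is pure:
its height is `1`. -/
theorem height_eq_one_of_column_eq_one
    {A : Type*} [Finite A] (l : ℕ) (hl : 2 ≤ l)
    (θ : A → ℕ → A) (hθ : SubstPrimitive θ l)
    (a₀ : A) (ha₀ : θ a₀ 0 = a₀)
    (hc : columnNumber θ l = 1) :
    substHeight θ l a₀ = 1 :=
  height_eq_one_of_column_eq_one_general l hl θ hθ a₀ ha₀ hc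
end

section
/- Let θ : A → A^λ be a primitive substitution of constant length λ ≥ 2, let ~θ be its synchronizing part, assume M₀ ∈ 𝒳(θ) satisfies ~θ(M₀)_0 = M₀ and let ũ ∈ 𝒳(θ)^ℕ be the fixed point of ~θ obtained by iterating ~θ at M₀. Then θ is quasi-bijective (there exists n₀ such that for all n ≥ n₀ and all 0 ≤ j < λ^n, |{θ^n(a)_j : a ∈ A}| = c(θ)) if and only if ũ is periodic. -/
open Filter Topology

/-!
Write `u = ũ`, so that `u n = {θ^{n+1}(a)_n : a ∈ M₀}`. Every `u n` is itself a column of `θ`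
of cardinality `c = c(θ)`, and `u` is self-similar: `u (n λ^k + j) = θ^k(u n)_j`. Hence
`u (n λ^k + j)` is contained in the column `C_{k,j} = {θ^k(a)_j : a ∈ A}` and equals it as soon as
`|C_{k,j}| = c`. If `θ` is quasi-bijective this holds for all `j < λ^k`, so `u m = C_{k, m mod λ^k}`
is `λ^k`-periodic. Conversely, fix a column `C_{k₁,j₁}` of cardinality `c`; then
`u j₁ = u (λ^{k₁} + j₁)`, which together with a period `p ≤ λ^p` and self-similarity makes `u`
periodic with period `λ^{k₁+p}`. Since by primitivity every letter lies in some `u m`, each column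
`C_{n,j}` with `n ≥ k₁ + p` is contained in `u j`, so it has cardinality `c`.
-/

lemma mul_pow_add_lt_pow_add {l k₀ k j₀ j : ℕ} (hj₀ : j₀ < l ^ k₀) (hj : j < l ^ k) :
    j₀ * l ^ k + j < l ^ (k₀ + k) :=
  calc j₀ * l ^ k + j < (j₀ + 1) * l ^ k := by rw [add_one_mul]; omega
    _ ≤ l ^ k₀ * l ^ k := Nat.mul_le_mul_right _ hj₀
    _ = l ^ (k₀ + k) := (pow_add l k₀ k).symm

lemma lt_pow_succ_self {l : ℕ} (hl : 2 ≤ l) (n : ℕ) : n < l ^ (n + 1) :=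
  (Nat.lt_pow_self hl).trans (Nat.pow_lt_pow_succ hl)

lemma Function.Periodic.eq_of_modEq {α : Type*} {u : ℕ → α} {p : ℕ} (hu : Function.Periodic u p)
    {a b : ℕ} (hab : a ≡ b [MOD p]) : u a = u b := by
  rw [← hu.map_mod_nat a, ← hu.map_mod_nat b, hab]

section SubstIter

variable {X : Type*} (ζ : X → ℕ → X) (l : ℕ)

theorem substIter_add_s11 (k k' : ℕ) (x : X) (j : ℕ) {j' : ℕ} (hj' : j' < l ^ k') :
    substIter ζ l (k + k') x (j * l ^ k' + j') = substIter ζ l k' (substIter ζ l k x j) j' := by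
  induction k' generalizing j' with
  | zero =>
    obtain rfl : j' = 0 := by simpa using hj'
    simp [substIter]
  | succ k' ih =>
    have hl : 0 < l := Nat.pos_of_ne_zero (by rintro rfl; simp at hj')
    have hsplit : j * l ^ (k' + 1) + j' = j' % l + l * (j * l ^ k' + j' / l) := by
      rw [pow_succ]; linarith [Nat.mod_add_div j' l]
    have hdiv : j' / l < l ^ k' := Nat.div_lt_of_lt_mul (by rwa [← pow_succ'])
    rw [← Nat.add_assoc, substIter, substIter, hsplit, Nat.add_mul_div_left _ _ hl,
      Nat.add_mul_mod_self_left, Nat.mod_div_self, Nat.mod_mod, zero_add, ih hdiv]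

variable {ζ l} {x₀ : X} (hx₀ : ζ x₀ 0 = x₀)
include hx₀

theorem substFixedPoint_zero : substFixedPoint ζ l x₀ 0 = x₀ := by
  simp [substFixedPoint, substIter, hx₀]

theorem substIter_eq_of_le (hl : 0 < l) {k k' n : ℕ} (hk : k ≤ k') (hn : n < l ^ k) :
    substIter ζ l k' x₀ n = substIter ζ l k x₀ n := by
  induction k', hk using Nat.le_induction with
  | base => rfl
  | succ k' hk ih =>
    have hn' : n < l ^ k' := hn.trans_le (Nat.pow_le_pow_right hl hk)
    have h := substIter_add_s11 ζ l 1 k' x₀ 0 hn'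
    rwa [zero_mul, zero_add, Nat.add_comm, ← substFixedPoint, substFixedPoint_zero hx₀, ih] at h

theorem substIter_eq_substFixedPoint (hl : 2 ≤ l) {k n : ℕ} (hn : n < l ^ k) :
    substIter ζ l k x₀ n = substFixedPoint ζ l x₀ n := by
  rcases le_total k (n + 1) with h | h
  · exact (substIter_eq_of_le hx₀ (by omega) h hn).symm
  · exact substIter_eq_of_le hx₀ (by omega) h (lt_pow_succ_self hl n)

theorem substFixedPoint_mul_pow_add_s11 (hl : 2 ≤ l) (n : ℕ) {k j : ℕ} (hj : j < l ^ k) :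
    substFixedPoint ζ l x₀ (n * l ^ k + j) = substIter ζ l k (substFixedPoint ζ l x₀ n) j := by
  rw [← substIter_eq_substFixedPoint hx₀ hl (mul_pow_add_lt_pow_add (lt_pow_succ_self hl n) hj)]
  exact substIter_add_s11 ζ l (n + 1) k x₀ n hj

/-- Self-similarity transports a coincidence `u i = u (i + q)` of a periodic fixed point `u` to
every position, because each residue class modulo the period meets `i λ^k + [0, λ^k)`. -/
theorem periodic_substFixedPoint_mul_pow (hl : 2 ≤ l) {p k : ℕ} (hp : 0 < p) (hpk : p ≤ l ^ k)
    (hper : Function.Periodic (substFixedPoint ζ l x₀) p) {i q : ℕ}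
    (hq : substFixedPoint ζ l x₀ (i + q) = substFixedPoint ζ l x₀ i) :
    Function.Periodic (substFixedPoint ζ l x₀) (q * l ^ k) := by
  intro x
  obtain ⟨p, rfl⟩ : ∃ p', p = p' + 1 := ⟨p - 1, by omega⟩
  set j := (x + p * i * l ^ k) % (p + 1)
  have hj : j < l ^ k := (Nat.mod_lt _ hp).trans_le hpk
  have hx : i * l ^ k + j ≡ x [MOD p + 1] :=
    calc i * l ^ k + j ≡ i * l ^ k + (x + p * i * l ^ k) [MOD p + 1] :=
          Nat.ModEq.add_left _ (Nat.mod_modEq _ _)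
      _ = x + (p + 1) * (i * l ^ k) := by ring
      _ ≡ x [MOD p + 1] := Nat.modEq_iff_dvd' (by omega) |>.mpr (by simp) |>.symm
  calc substFixedPoint ζ l x₀ (x + q * l ^ k)
      = substFixedPoint ζ l x₀ ((i + q) * l ^ k + j) :=
        hper.eq_of_modEq (by rw [add_mul, add_right_comm]; exact (hx.add_right _).symm)
    _ = substFixedPoint ζ l x₀ (i * l ^ k + j) := by
        rw [substFixedPoint_mul_pow_add_s11 hx₀ hl _ hj, substFixedPoint_mul_pow_add_s11 hx₀ hl _ hj, hq]
    _ = substFixedPoint ζ l x₀ x := hper.eq_of_modEq hx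

end SubstIter

theorem substIter_synchPart {A : Type*} (θ : A → ℕ → A) (l k : ℕ) (M : Set A) (j : ℕ) :
    substIter (synchPart θ) l k M j = (fun a => substIter θ l k a j) '' M := by
  induction k generalizing M j with
  | zero => simp [substIter]
  | succ k ih => simp only [substIter, synchPart, ih, Set.image_image]

def substColumn {A : Type*} (θ : A → ℕ → A) (l k j : ℕ) : Set A :=
  (fun a => substIter θ l k a j) '' Set.univ

def QuasiBijective {A : Type*} (θ : A → ℕ → A) (l : ℕ) : Prop :=
  ∃ n₀ : ℕ, ∀ n, n₀ ≤ n → ∀ j, j < l ^ n → (substColumn θ l n j).ncard = columnNumber θ l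

section Columns

variable {A : Type*} {θ : A → ℕ → A} {l : ℕ}

theorem image_substColumn {k₀ j₀ k j : ℕ} (hj : j < l ^ k) :
    (fun a => substIter θ l k a j) '' substColumn θ l k₀ j₀ =
      substColumn θ l (k₀ + k) (j₀ * l ^ k + j) := by
  rw [substColumn, substColumn, Set.image_image]
  exact Set.image_congr fun a _ => (substIter_add_s11 θ l k₀ k a j₀ hj).symm

theorem columnNumber_le_ncard {k j : ℕ} (hk : 1 ≤ k) (hj : j < l ^ k) :
    columnNumber θ l ≤ (substColumn θ l k j).ncard :=
  Nat.sInf_le ⟨k, hk, j, hj, rfl⟩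

theorem exists_ncard_substColumn_eq_columnNumber (hl : 0 < l) :
    ∃ k, 1 ≤ k ∧ ∃ j, j < l ^ k ∧ (substColumn θ l k j).ncard = columnNumber θ l :=
  Nat.sInf_mem (s := {n | ∃ k, 1 ≤ k ∧ ∃ j, j < l ^ k ∧ (substColumn θ l k j).ncard = n})
    ⟨_, 1, le_rfl, 0, by simpa using hl, rfl⟩

theorem ncard_image_of_mem_columnSets [Finite A] {M : Set A} (hM : M ∈ columnSets θ l) {k j : ℕ}
    (hj : j < l ^ k) : ((fun a => substIter θ l k a j) '' M).ncard = columnNumber θ l := by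
  obtain ⟨⟨k₀, hk₀, j₀, hj₀, hM⟩, hcard⟩ := hM
  change M = substColumn θ l k₀ j₀ at hM
  subst hM
  refine le_antisymm (hcard ▸ Set.ncard_image_le (Set.toFinite _)) ?_
  rw [image_substColumn hj]
  exact columnNumber_le_ncard (by omega) (mul_pow_add_lt_pow_add hj₀ hj)

end Columns

section SynchronizingFixedPoint

variable {A : Type*} {l : ℕ} {θ : A → ℕ → A} {M₀ : Set A}

theorem substFixedPoint_synchPart_mul_pow_add (hl : 2 ≤ l) (hfix : synchPart θ M₀ 0 = M₀) (n : ℕ)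
    {k j : ℕ} (hj : j < l ^ k) :
    substFixedPoint (synchPart θ) l M₀ (n * l ^ k + j) =
      (fun a => substIter θ l k a j) '' substFixedPoint (synchPart θ) l M₀ n := by
  rw [substFixedPoint_mul_pow_add_s11 hfix hl n hj, substIter_synchPart]

theorem ncard_substFixedPoint_synchPart [Finite A] (hl : 2 ≤ l) (hM₀ : M₀ ∈ columnSets θ l)
    (n : ℕ) :
    (substFixedPoint (synchPart θ) l M₀ n).ncard = columnNumber θ l := by
  rw [substFixedPoint, substIter_synchPart]
  exact ncard_image_of_mem_columnSets hM₀ (lt_pow_succ_self hl n)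

theorem substFixedPoint_synchPart_eq_substColumn [Finite A] (hl : 2 ≤ l)
    (hM₀ : M₀ ∈ columnSets θ l) (hfix : synchPart θ M₀ 0 = M₀) (n : ℕ) {k j : ℕ} (hj : j < l ^ k)
    (hcard : (substColumn θ l k j).ncard = columnNumber θ l) :
    substFixedPoint (synchPart θ) l M₀ (n * l ^ k + j) = substColumn θ l k j := by
  refine Set.eq_of_subset_of_ncard_le ?_ ?_ (Set.toFinite _)
  · rw [substFixedPoint_synchPart_mul_pow_add hl hfix n hj]
    exact Set.image_mono (Set.subset_univ _)
  · rw [hcard, ncard_substFixedPoint_synchPart hl hM₀]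

theorem exists_mem_substFixedPoint_synchPart (hl : 2 ≤ l) (hθ : SubstPrimitive θ l)
    (hM₀ : M₀ ∈ columnSets θ l) (hfix : synchPart θ M₀ 0 = M₀) (a : A) :
    ∃ m, a ∈ substFixedPoint (synchPart θ) l M₀ m := by
  obtain ⟨⟨k₀, -, j₀, -, rfl⟩, -⟩ := hM₀
  obtain ⟨k, -, hprim⟩ := hθ
  obtain ⟨i, hi, hia⟩ := hprim (substIter θ l k₀ a j₀) a
  refine ⟨i, ?_⟩
  rw [← zero_add i, ← zero_mul (l ^ k), substFixedPoint_synchPart_mul_pow_add hl hfix 0 hi,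
    substFixedPoint_zero hfix]
  exact ⟨_, ⟨a, Set.mem_univ _, rfl⟩, hia⟩

theorem substColumn_subset_of_periodic (hl : 2 ≤ l) (hθ : SubstPrimitive θ l)
    (hM₀ : M₀ ∈ columnSets θ l) (hfix : synchPart θ M₀ 0 = M₀) {n j : ℕ} (hj : j < l ^ n)
    (hper : Function.Periodic (substFixedPoint (synchPart θ) l M₀) (l ^ n)) :
    substColumn θ l n j ⊆ substFixedPoint (synchPart θ) l M₀ j := by
  rintro _ ⟨a, -, rfl⟩
  obtain ⟨m, hm⟩ := exists_mem_substFixedPoint_synchPart hl hθ hM₀ hfix a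
  rw [← hper.nat_mul m j, Nat.cast_id, Nat.add_comm,
    substFixedPoint_synchPart_mul_pow_add hl hfix m hj]
  exact ⟨a, hm, rfl⟩

theorem isPeriodicSeq_of_quasiBijective [Finite A] (hl : 2 ≤ l) (hM₀ : M₀ ∈ columnSets θ l)
    (hfix : synchPart θ M₀ 0 = M₀) (hqb : QuasiBijective θ l) :
    IsPeriodicSeq (substFixedPoint (synchPart θ) l M₀) := by
  obtain ⟨k, hk⟩ := hqb
  have hpos : 0 < l ^ k := by positivity
  have hcol : ∀ m, substFixedPoint (synchPart θ) l M₀ m = substColumn θ l k (m % l ^ k) := by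
    intro m
    have hj := Nat.mod_lt m hpos
    rw [← substFixedPoint_synchPart_eq_substColumn hl hM₀ hfix (m / l ^ k) hj (hk k le_rfl _ hj),
      Nat.div_add_mod']
  exact ⟨l ^ k, hpos, fun m => by rw [hcol, hcol, Nat.add_mod_right]⟩

theorem quasiBijective_of_isPeriodicSeq [Finite A] (hl : 2 ≤ l) (hθ : SubstPrimitive θ l)
    (hM₀ : M₀ ∈ columnSets θ l) (hfix : synchPart θ M₀ 0 = M₀)
    (hper : IsPeriodicSeq (substFixedPoint (synchPart θ) l M₀)) : QuasiBijective θ l := by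
  obtain ⟨p, hp, hper⟩ := hper
  obtain ⟨k₁, hk₁, j₁, hj₁, hcard⟩ :=
    exists_ncard_substColumn_eq_columnNumber (θ := θ) (l := l) (by omega)
  have hsynch : substFixedPoint (synchPart θ) l M₀ (j₁ + l ^ k₁) =
      substFixedPoint (synchPart θ) l M₀ j₁ := by
    have h n := substFixedPoint_synchPart_eq_substColumn hl hM₀ hfix n hj₁ hcard
    rw [Nat.add_comm, ← one_mul (l ^ k₁), h, ← h 0, zero_mul, zero_add]
  have hperPow : Function.Periodic (substFixedPoint (synchPart θ) l M₀) (l ^ (k₁ + p)) := by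
    rw [pow_add]
    exact periodic_substFixedPoint_mul_pow hfix hl hp (Nat.lt_pow_self hl).le hper hsynch
  refine ⟨k₁ + p, fun n hn j hj => le_antisymm ?_ (columnNumber_le_ncard (by omega) hj)⟩
  have hperN : Function.Periodic (substFixedPoint (synchPart θ) l M₀) (l ^ n) := by
    simpa only [Nat.cast_id, ← pow_add, Nat.sub_add_cancel hn] using
      hperPow.nat_mul (l ^ (n - (k₁ + p)))
  calc (substColumn θ l n j).ncard
      ≤ (substFixedPoint (synchPart θ) l M₀ j).ncard :=
        Set.ncard_le_ncard (substColumn_subset_of_periodic hl hθ hM₀ hfix hj hperN)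
    _ = columnNumber θ l := ncard_substFixedPoint_synchPart hl hM₀ j

end SynchronizingFixedPoint

/-- A primitive substitution `θ` of constant length is quasi-bijective
(eventually every column set has cardinality `c(θ)`) if and only if the fixed point `ũ`
of its synchronizing part `~θ` (at a letter `M₀ ∈ 𝒳(θ)` with `~θ(M₀)_0 = M₀`) is
periodic. -/
theorem quasiBijective_iff_synchronizing_fixedPoint_periodic
    {A : Type*} [Finite A] (l : ℕ) (hl : 2 ≤ l)
    (θ : A → ℕ → A) (hθ : SubstPrimitive θ l)
    (M₀ : Set A) (hM₀ : M₀ ∈ columnSets θ l) (hfix : synchPart θ M₀ 0 = M₀) :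
    (∃ n₀ : ℕ, ∀ n, n₀ ≤ n → ∀ j, j < l ^ n →
        ((fun a => substIter θ l n a j) '' Set.univ).ncard = columnNumber θ l) ↔
      IsPeriodicSeq (substFixedPoint (synchPart θ) l M₀) :=
  ⟨isPeriodicSeq_of_quasiBijective hl hM₀ hfix,
    quasiBijective_of_isPeriodicSeq hl hθ hM₀ hfix⟩
end
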